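/- Let f : ℝ³ → ℝ be differentiable and nowhere zero, and let a : ℝ³ → ℝ satisfy f(p)·(∂f/∂p_i)(p) = −a(p)·p_i for i = 1,2,3 and all p ∈ ℝ³. Define J_i(q,p) = (1/f(p))·ε_{ijk} q_j p_k, and fix ξ ∈ ℝ³. At each point x = (q,p) define the vector ρ(ξ)(x) ∈ ℝ⁶ with q-components (ρ_q)_j = ε_{ijk} ξ_i q_k and p-components (ρ_p)_j = ε_{ijk} ξ_i p_k, and the 6×6 matrix Ω(x) = [[0, −(1/f(p))·I₃],[(1/f(p))·I₃, (1/f(p)²)·L(x)]] in 3×3 blocks, where L(x)_{ij} = a(p)·ε_{ijk}·J_k(x). Then for every x and every w ∈ ℝ⁶, the Fréchet derivative of the function ξ·J = Σ_i ξ_i J_i satisfies D(ξ·J)(x)(w) = ρ(ξ)(x)ᵀ · Ω(x) · w. That is, the diagonal SO(3)-action is Hamiltonian with momentum map μ(q,p) = Σ_i J_i(q,p) 𝔱^i. -/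

import Mathlib

open Matrix

/-- Deformed angular momentum vector `J_i(q,p) = (1/f(p))·ε_{ijk} q_j p_k` on the phase space
`ℝ⁶` with coordinates `(q₁,q₂,q₃,p₁,p₂,p₃)`. -/
noncomputable def J3fun (f : (Fin 3 → ℝ) → ℝ) (x : Fin 6 → ℝ) : Fin 3 → ℝ :=
  (f ![x 3, x 4, x 5])⁻¹ • crossProduct ![x 0, x 1, x 2] ![x 3, x 4, x 5]

/-- Matrix of the deformed symplectic form of the three-dimensional rotationally invariant
(Maggiore-type) GUP theory: block form `[[0, −(1/f)·I₃],[(1/f)·I₃, (1/f²)·L]]` with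
`L_{ij} = a(p)·ε_{ijk}·J_k`. -/
noncomputable def Omega3 (f a : (Fin 3 → ℝ) → ℝ) (x : Fin 6 → ℝ) : Matrix (Fin 6) (Fin 6) ℝ :=
  let p : Fin 3 → ℝ := ![x 3, x 4, x 5]
  let J : Fin 3 → ℝ := J3fun f x
  let g : ℝ := (f p)⁻¹
  let b : ℝ := a p / (f p) ^ 2
  !![0, 0, 0, -g, 0, 0;
     0, 0, 0, 0, -g, 0;
     0, 0, 0, 0, 0, -g;
     g, 0, 0, 0, b * J 2, -(b * J 1);
     0, g, 0, -(b * J 2), 0, b * J 0;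
     0, 0, g, b * J 1, -(b * J 0), 0]

/-- Vector field `ρ(ξ)` on the phase space `ℝ⁶` generated by the Lie algebra element
`ξ^i T_i ∈ 𝔰𝔬(3)`: `(ρ_q)_j = ε_{ijk} ξ_i q_k`, `(ρ_p)_j = ε_{ijk} ξ_i p_k`. -/
def rho3 (ξ : Fin 3 → ℝ) (x : Fin 6 → ℝ) : Fin 6 → ℝ :=
  ![x 1 * ξ 2 - x 2 * ξ 1, x 2 * ξ 0 - x 0 * ξ 2, x 0 * ξ 1 - x 1 * ξ 0,
    x 4 * ξ 2 - x 5 * ξ 1, x 5 * ξ 0 - x 3 * ξ 2, x 3 * ξ 1 - x 4 * ξ 0]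

/-! Write `ξ·J = f(p)⁻¹ · ξ·(q × p)`. Differentiating, the Leibniz rule gives
`f⁻¹ · ξ·(δq × p + q × δp)`, and the closure condition turns the derivative of `f⁻¹` into
`a f⁻³ (p·δp)`. On the other side, `ρ(ξ) = (q × ξ, p × ξ)`; the `I₃/f` blocks of `Ω` reproduce
the Leibniz term, and the Binet–Cauchy identity turns the `L/f²` block into
`a f⁻² ((p·δp)(ξ·J) − (p·J)(ξ·δp))`, where `p·J = 0`. -/

section Closure

variable {n : ℕ} {f a : (Fin n → ℝ) → ℝ} {p : Fin n → ℝ}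

theorem fderiv_apply_eq_of_closure (hp : f p ≠ 0)
    (hfa : ∀ i, f p * fderiv ℝ f p (Pi.single i 1) = -(a p * p i)) (v : Fin n → ℝ) :
    fderiv ℝ f p v = -(a p / f p) * (p ⬝ᵥ v) := by
  conv_lhs => rw [pi_eq_sum_univ' v]
  simp only [map_sum, map_smul, smul_eq_mul, dotProduct, Finset.mul_sum]
  refine Finset.sum_congr rfl fun i _ => ?_
  field_simp
  linear_combination v i * hfa i

theorem fderiv_inv_apply_eq_of_closure (hf : DifferentiableAt ℝ f p) (hp : f p ≠ 0)
    (hfa : ∀ i, f p * fderiv ℝ f p (Pi.single i 1) = -(a p * p i)) (v : Fin n → ℝ) :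
    fderiv ℝ (fun p => (f p)⁻¹) p v = a p / f p ^ 3 * (p ⬝ᵥ v) := by
  have hinv : HasFDerivAt (fun p => (f p)⁻¹) _ p := (hasFDerivAt_inv hp).comp p hf.hasFDerivAt
  rw [hinv.fderiv]
  simp only [ContinuousLinearMap.comp_apply, ContinuousLinearMap.toSpanSingleton_apply,
    fderiv_apply_eq_of_closure hp hfa, smul_eq_mul]
  field_simp

end Closure

noncomputable def tripleProductCLM (ξ : Fin 3 → ℝ) : (Fin 3 → ℝ) →L[ℝ] (Fin 3 → ℝ) →L[ℝ] ℝ :=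
  (crossProduct.compr₂ (dotProductBilin ℝ ℝ ξ)).toContinuousBilinearMap

theorem tripleProductCLM_apply (ξ u v : Fin 3 → ℝ) : tripleProductCLM ξ u v = ξ ⬝ᵥ u ⨯₃ v := rfl

noncomputable def positionCLM : (Fin 6 → ℝ) →L[ℝ] Fin 3 → ℝ :=
  .pi ![.proj 0, .proj 1, .proj 2]

noncomputable def momentumCLM : (Fin 6 → ℝ) →L[ℝ] Fin 3 → ℝ :=
  .pi ![.proj 3, .proj 4, .proj 5]

theorem positionCLM_apply (x : Fin 6 → ℝ) : positionCLM x = ![x 0, x 1, x 2] := by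
  ext i; fin_cases i <;> rfl

theorem momentumCLM_apply (x : Fin 6 → ℝ) : momentumCLM x = ![x 3, x 4, x 5] := by
  ext i; fin_cases i <;> rfl

theorem J3fun_eq_smul_cross (f : (Fin 3 → ℝ) → ℝ) (y : Fin 6 → ℝ) :
    J3fun f y = (f (momentumCLM y))⁻¹ • positionCLM y ⨯₃ momentumCLM y := by
  rw [J3fun, positionCLM_apply, momentumCLM_apply]

theorem fderiv_dotProduct_J3fun {f a : (Fin 3 → ℝ) → ℝ} {x : Fin 6 → ℝ}
    (hf : DifferentiableAt ℝ f (momentumCLM x)) (hp : f (momentumCLM x) ≠ 0)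
    (hfa : ∀ i, f (momentumCLM x) * fderiv ℝ f (momentumCLM x) (Pi.single i 1) =
      -(a (momentumCLM x) * momentumCLM x i))
    (ξ : Fin 3 → ℝ) (w : Fin 6 → ℝ) :
    fderiv ℝ (fun y => ξ ⬝ᵥ J3fun f y) x w =
      a (momentumCLM x) / f (momentumCLM x) ^ 3 * (momentumCLM x ⬝ᵥ momentumCLM w) *
          (ξ ⬝ᵥ positionCLM x ⨯₃ momentumCLM x) +
        (f (momentumCLM x))⁻¹ *
          (ξ ⬝ᵥ (positionCLM w ⨯₃ momentumCLM x + positionCLM x ⨯₃ momentumCLM w)) := by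
  have hinv : HasFDerivAt (fun y => (f (momentumCLM y))⁻¹)
      ((fderiv ℝ (fun p => (f p)⁻¹) (momentumCLM x)).comp momentumCLM) x :=
    (hf.inv hp).hasFDerivAt.comp x momentumCLM.hasFDerivAt
  have htriple := (tripleProductCLM ξ).hasFDerivAt_of_bilinear
    positionCLM.hasFDerivAt momentumCLM.hasFDerivAt (x := x)
  simp_rw [J3fun_eq_smul_cross, dotProduct_smul, smul_eq_mul, ← tripleProductCLM_apply]
  rw [(hinv.fun_mul htriple).fderiv]
  simp only [_root_.add_apply, _root_.smul_apply, ContinuousLinearMap.comp_apply,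
    ContinuousLinearMap.precompR_apply, ContinuousLinearMap.precompL_apply,
    ContinuousLinearMap.compL_apply, tripleProductCLM_apply,
    fderiv_inv_apply_eq_of_closure hf hp hfa, smul_eq_mul, dotProduct_add]
  ring

theorem rho3_dotProduct_Omega3_mulVec (f a : (Fin 3 → ℝ) → ℝ) (ξ : Fin 3 → ℝ)
    (x w : Fin 6 → ℝ) :
    rho3 ξ x ⬝ᵥ Omega3 f a x *ᵥ w =
      (f (momentumCLM x))⁻¹ *
          (ξ ⬝ᵥ (positionCLM w ⨯₃ momentumCLM x + positionCLM x ⨯₃ momentumCLM w)) +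
        a (momentumCLM x) / f (momentumCLM x) ^ 2 *
          (momentumCLM x ⨯₃ ξ ⬝ᵥ momentumCLM w ⨯₃ J3fun f x) := by
  simp only [rho3, Omega3, mulVec, dotProduct, Fin.sum_univ_six, Fin.sum_univ_three,
    positionCLM_apply, momentumCLM_apply, cross_apply, of_apply, cons_val, Pi.add_apply]
  ring

/-- If `f` is differentiable and nowhere zero and `f·∂f/∂p_i = −a·p_i` (closure condition),
then for every `ξ ∈ 𝔰𝔬(3)` the Fréchet derivative of `ξ·J` satisfies
`D(ξ·J)(x)(w) = ρ(ξ)(x)ᵀ·Ω(x)·w`: the diagonal `SO(3)`-action is Hamiltonian with momentum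
map `μ(q,p) = Σ_i J_i(q,p) 𝔱^i`. -/
theorem stmt_13 (f : (Fin 3 → ℝ) → ℝ) (hf : Differentiable ℝ f)
    (hf0 : ∀ p, f p ≠ 0) (a : (Fin 3 → ℝ) → ℝ)
    (hfa : ∀ (p : Fin 3 → ℝ) (i : Fin 3),
      f p * fderiv ℝ f p (Pi.single i 1) = -(a p * p i))
    (ξ : Fin 3 → ℝ) :
    ∀ x w : Fin 6 → ℝ,
      fderiv ℝ (fun y : Fin 6 → ℝ => ∑ i : Fin 3, ξ i * J3fun f y i) x w =
        rho3 ξ x ⬝ᵥ (Omega3 f a x).mulVec w := by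
  intro x w
  have hp : f (momentumCLM x) ≠ 0 := hf0 _
  have hpJ : momentumCLM x ⬝ᵥ J3fun f x = 0 := by
    rw [J3fun_eq_smul_cross, dotProduct_smul, dot_cross_self, smul_zero]
  change fderiv ℝ (fun y => ξ ⬝ᵥ J3fun f y) x w = _
  rw [fderiv_dotProduct_J3fun (hf _) hp (hfa _), rho3_dotProduct_Omega3_mulVec,
    cross_dot_cross, hpJ, J3fun_eq_smul_cross, dotProduct_smul, smul_eq_mul]
  field_simp
  ring
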